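/- arXiv:1709.01880 — 2 statements merged into one kernel-verified Lean document; each statement's English description precedes it below -/
import Mathlib

section
/- Let u : [0,1] → ℝ be twice continuously differentiable, let b₁ ∈ ℝ and b₂ ≠ 0 with b₁/b₂ ≤ 1/2. If u(1) = 0 and b₁·u(0) + b₂·u′(0) = 0, then ∫_0^1 u″(x)·u(x) dx ≤ 0. -/
/-!
Integrating by parts, `∫₀¹ u'' u = u'(1) u(1) - u'(0) u(0) - ∫₀¹ u'² = r u(0)² - ∫₀¹ u'²` with
`r = b₁ / b₂`, using both boundary conditions. Since `u(1) = 0`, Cauchy–Schwarz on the unit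
interval gives `u(0)² = (∫₀¹ u')² ≤ ∫₀¹ u'²`, so the boundary term `r u(0)² ≤ u(0)² / 2` is
dominated by the Dirichlet energy.
-/

open Set intervalIntegral
open MeasureTheory (volume)

theorem sq_intervalIntegral_le_mul_integral_sq {f : ℝ → ℝ} {a b : ℝ} (hab : a ≤ b)
    (hf : IntervalIntegrable f volume a b)
    (hf2 : IntervalIntegrable (fun x => f x ^ 2) volume a b) :
    (∫ x in a..b, f x) ^ 2 ≤ (b - a) * ∫ x in a..b, f x ^ 2 := by
  -- `t ↦ ∫ (f - t)²` is a nonnegative quadratic, so its discriminant is nonpositive.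
  have hquad : ∀ t : ℝ, 0 ≤ (b - a) * (t * t) + (-2 * ∫ x in a..b, f x) * t
      + ∫ x in a..b, f x ^ 2 := by
    intro t
    have hexpand : ∫ x in a..b, (f x - t) ^ 2
        = (b - a) * (t * t) + (-2 * ∫ x in a..b, f x) * t + ∫ x in a..b, f x ^ 2 := by
      have hsq : ∀ x, (f x - t) ^ 2 = f x ^ 2 - (2 * t) * f x + t ^ 2 := fun x => by ring
      simp_rw [hsq]
      rw [integral_add (hf2.sub (hf.const_mul _)) intervalIntegrable_const,
        integral_sub hf2 (hf.const_mul _), integral_const_mul, integral_const, smul_eq_mul]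
      ring
    exact hexpand ▸ integral_nonneg hab fun x _ => sq_nonneg _
  have hdiscrim := discrim_le_zero hquad
  rw [discrim] at hdiscrim
  linarith

section DerivOnIcc

variable {u u' u'' : ℝ → ℝ} {a b : ℝ}

theorem sq_sub_le_mul_integral_sq_deriv (hab : a ≤ b)
    (hu : ∀ x ∈ Icc a b, HasDerivWithinAt u (u' x) (Icc a b) x)
    (hu' : ContinuousOn u' (Icc a b)) :
    (u b - u a) ^ 2 ≤ (b - a) * ∫ x in a..b, u' x ^ 2 := by
  rw [← uIcc_of_le hab] at hu'
  have hftc : ∫ x in a..b, u' x = u b - u a :=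
    integral_eq_sub_of_hasDerivAt_of_le hab (fun x hx => (hu x hx).continuousWithinAt)
      (fun x hx => (hu x (Ioo_subset_Icc_self hx)).hasDerivAt (Icc_mem_nhds hx.1 hx.2))
      hu'.intervalIntegrable
  exact hftc ▸ sq_intervalIntegral_le_mul_integral_sq hab hu'.intervalIntegrable
    (hu'.pow 2).intervalIntegrable

theorem integral_deriv2_mul_self (hab : a ≤ b)
    (hu : ∀ x ∈ Icc a b, HasDerivWithinAt u (u' x) (Icc a b) x)
    (hu' : ∀ x ∈ Icc a b, HasDerivWithinAt u' (u'' x) (Icc a b) x)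
    (hu'' : ContinuousOn u'' (Icc a b)) :
    ∫ x in a..b, u'' x * u x = u b * u' b - u a * u' a - ∫ x in a..b, u' x ^ 2 := by
  rw [← uIcc_of_le hab] at hu hu' hu''
  have hu'cont : ContinuousOn u' (uIcc a b) := fun x hx => (hu' x hx).continuousWithinAt
  simp_rw [mul_comm (u'' _), sq]
  exact integral_mul_deriv_eq_deriv_mul_of_hasDerivWithinAt hu hu'
    hu'cont.intervalIntegrable hu''.intervalIntegrable

end DerivOnIcc

theorem stmt_8 (u u' u'' : ℝ → ℝ) (b₁ b₂ : ℝ) (hb₂ : b₂ ≠ 0)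
    (hratio : b₁ / b₂ ≤ 1 / 2)
    (hderiv : ∀ x ∈ Icc (0:ℝ) 1, HasDerivWithinAt u (u' x) (Icc 0 1) x)
    (hderiv' : ∀ x ∈ Icc (0:ℝ) 1, HasDerivWithinAt u' (u'' x) (Icc 0 1) x)
    (hcont : ContinuousOn u'' (Icc (0:ℝ) 1))
    (hbc1 : u 1 = 0) (hbc0 : b₁ * u 0 + b₂ * u' 0 = 0) :
    (∫ x in (0:ℝ)..1, u'' x * u x) ≤ 0 := by
  have hu'cont : ContinuousOn u' (Icc 0 1) := fun x hx => (hderiv' x hx).continuousWithinAt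
  have hpoincare : u 0 ^ 2 ≤ ∫ x in (0:ℝ)..1, u' x ^ 2 := by
    simpa [hbc1] using sq_sub_le_mul_integral_sq_deriv zero_le_one hderiv hu'cont
  have hboundary : -(u 0 * u' 0) = b₁ / b₂ * u 0 ^ 2 := by
    rw [div_mul_eq_mul_div, eq_div_iff hb₂]
    linear_combination -u 0 * hbc0
  have henergy_nonneg : 0 ≤ ∫ x in (0:ℝ)..1, u' x ^ 2 :=
    integral_nonneg zero_le_one fun x _ => sq_nonneg _
  calc ∫ x in (0:ℝ)..1, u'' x * u x
      = b₁ / b₂ * u 0 ^ 2 - ∫ x in (0:ℝ)..1, u' x ^ 2 := by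
        rw [integral_deriv2_mul_self zero_le_one hderiv hderiv' hcont, hbc1, ← hboundary]
        ring
    _ ≤ 1 / 2 * u 0 ^ 2 - ∫ x in (0:ℝ)..1, u' x ^ 2 := by gcongr
    _ ≤ 0 := by linarith
end

section
/- Under Assumption A3b (a₂ ≠ 0; there exist B′₁, B′₂ ≥ 0 with B′₁ + B′₂ = μ such that −(a₁/a₂)μ + M₂/2 ≤ B′₂, (b₁/b₂)μ − M₂/2 < −2B′₁, and M₁ < B′₁ − 2B′₂), there exist constants C₃, C₄, C₅ > 0 such that every classical solution u of the boundary-value problem satisfies, for all t ≥ 0: ‖u(t,·)‖² ≤ ‖u(0,·)‖²·e^{−C₃t} + C₄·∫_0^t d₁(s)² ds + C₅·∫_0^t d₂(s)² ds, and ‖u(t,·)‖² ≤ ‖u(0,·)‖²·e^{−C₃t} + (1 − e^{−C₃t})·(C₄·sup_{0≤s≤t} d₁(s)² + C₅·sup_{0≤s≤t} d₂(s)²). -/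
/-!
Energy method. Multiplying the equation by `2u` and integrating by parts gives
`d/dt ‖u‖² = [2μ u u_x + M₂ u²]₀¹ - 2μ ‖u_x‖² + 2M₁ ‖u‖² + ∫ 2 u d`.
Split the dissipation along `μ = B₁' + B₂'`. By the boundary condition and Young's inequality the
flux at `x = 0` is at most `-4B₁' u(0)² + K d₁²`, and the Poincaré inequality
`‖u‖² ≤ 2u(0)² + ‖u_x‖²` turns `-4B₁' u(0)² - 2B₁' ‖u_x‖²` into `-2B₁' ‖u‖²`. The flux at `x = 1` is at
most `2B₂' u(1)²`, which the trace inequality `u(1)² ≤ 2‖u‖² + ‖u_x‖²` and `-2B₂' ‖u_x‖²` bound by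
`4B₂' ‖u‖²`. With `θ = B₁' - 2B₂' - M₁ > 0` and `2 u d ≤ θ u² + θ⁻¹ d₂²` this yields
`d/dt ‖u‖² ≤ -θ ‖u‖² + K d₁² + θ⁻¹ d₂²`, and Grönwall's inequality gives both estimates.
-/

open Set intervalIntegral Real
open MeasureTheory (volume)

lemma two_mul_le_mul_sq_add_inv_mul_sq {ε : ℝ} (hε : 0 < ε) (x y : ℝ) :
    2 * x * y ≤ ε * x ^ 2 + ε⁻¹ * y ^ 2 := by
  have key : ε⁻¹ * (ε * x - y) ^ 2 = ε * x ^ 2 - 2 * x * y + ε⁻¹ * y ^ 2 := by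
    field_simp
    ring
  nlinarith [key, show 0 ≤ ε⁻¹ * (ε * x - y) ^ 2 by positivity]

lemma integral_eq_sub_of_hasDerivWithinAt_Icc {f f' : ℝ → ℝ} {a b : ℝ} (hab : a ≤ b)
    (hf : ∀ x ∈ Icc a b, HasDerivWithinAt f (f' x) (Icc a b) x)
    (hf' : ContinuousOn f' (Icc a b)) : ∫ x in a..b, f' x = f b - f a :=
  integral_eq_sub_of_hasDerivAt_of_le hab (fun x hx => (hf x hx).continuousWithinAt)
    (fun x hx => (hf x (Ioo_subset_Icc_self hx)).hasDerivAt (Icc_mem_nhds hx.1 hx.2))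
    (hf'.intervalIntegrable_of_Icc hab)

lemma sq_integral_le_mul_integral_sq {g : ℝ → ℝ} {a b : ℝ} (hab : a ≤ b)
    (hg : ContinuousOn g (Icc a b)) :
    (∫ x in a..b, g x) ^ 2 ≤ (b - a) * ∫ x in a..b, g x ^ 2 := by
  rcases hab.eq_or_lt with rfl | hlt
  · simp
  set I := ∫ x in a..b, g x
  set c := I / (b - a) with hc
  have hg1 : IntervalIntegrable g volume a b := hg.intervalIntegrable_of_Icc hab
  have hg2 : IntervalIntegrable (fun x => g x ^ 2) volume a b :=
    (hg.pow 2).intervalIntegrable_of_Icc hab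
  -- the variance of `g` about its mean `c` is nonnegative
  have hvar : 0 ≤ ∫ x in a..b, (g x - c) ^ 2 := integral_nonneg hab fun x _ => sq_nonneg _
  simp_rw [sub_sq] at hvar
  rw [integral_add (hg2.sub ((hg1.const_mul 2).mul_const c)) intervalIntegrable_const,
    integral_sub hg2 ((hg1.const_mul 2).mul_const c), integral_mul_const, integral_const_mul,
    integral_const] at hvar
  have hcI : c * (b - a) = I := by rw [hc]; field_simp [(sub_pos.2 hlt).ne']
  simp only [smul_eq_mul] at hvar
  nlinarith [hvar]

section UnitInterval

variable {f f' : ℝ → ℝ}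

lemma integral_sq_le_of_hasDerivWithinAt
    (hf : ∀ x ∈ Icc (0:ℝ) 1, HasDerivWithinAt f (f' x) (Icc 0 1) x)
    (hf' : ContinuousOn f' (Icc 0 1)) :
    ∫ x in (0:ℝ)..1, f x ^ 2 ≤ 2 * f 0 ^ 2 + ∫ x in (0:ℝ)..1, f' x ^ 2 := by
  set A := ∫ x in (0:ℝ)..1, f' x ^ 2
  have hfc : ContinuousOn f (Icc 0 1) := fun x hx => (hf x hx).continuousWithinAt
  have hpt : ∀ x ∈ Icc (0:ℝ) 1, f x ^ 2 ≤ 2 * f 0 ^ 2 + 2 * A * x := by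
    intro x hx
    have hsub : Icc 0 x ⊆ Icc (0:ℝ) 1 := Icc_subset_Icc_right hx.2
    have hftc : ∫ y in (0:ℝ)..x, f' y = f x - f 0 :=
      integral_eq_sub_of_hasDerivWithinAt_Icc hx.1 (fun y hy => (hf y (hsub hy)).mono hsub)
        (hf'.mono hsub)
    have hA : ∫ y in (0:ℝ)..x, f' y ^ 2 ≤ A :=
      integral_mono_interval le_rfl hx.1 hx.2 (Filter.Eventually.of_forall fun _ => sq_nonneg _)
        ((hf'.pow 2).intervalIntegrable_of_Icc zero_le_one)
    have hcs := sq_integral_le_mul_integral_sq hx.1 (hf'.mono hsub)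
    rw [hftc, sub_zero] at hcs
    nlinarith [sq_nonneg (f x - 2 * f 0), mul_le_mul_of_nonneg_left hA hx.1]
  calc ∫ x in (0:ℝ)..1, f x ^ 2
      ≤ ∫ x in (0:ℝ)..1, (2 * f 0 ^ 2 + 2 * A * x) :=
        integral_mono_on zero_le_one ((hfc.pow 2).intervalIntegrable_of_Icc zero_le_one)
          (Continuous.intervalIntegrable (by fun_prop) _ _) hpt
    _ = 2 * f 0 ^ 2 + A := by
        rw [integral_add intervalIntegrable_const (Continuous.intervalIntegrable (by fun_prop) _ _),
          integral_const_mul (2 * A), integral_id]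
        norm_num
        ring

lemma sq_one_le_of_hasDerivWithinAt
    (hf : ∀ x ∈ Icc (0:ℝ) 1, HasDerivWithinAt f (f' x) (Icc 0 1) x)
    (hf' : ContinuousOn f' (Icc 0 1)) :
    f 1 ^ 2 ≤ 2 * (∫ x in (0:ℝ)..1, f x ^ 2) + ∫ x in (0:ℝ)..1, f' x ^ 2 := by
  have hfc : ContinuousOn f (Icc 0 1) := fun x hx => (hf x hx).continuousWithinAt
  have hftc : ∫ x in (0:ℝ)..1, (f x ^ 2 + x * (2 * f x * f' x)) = f 1 ^ 2 := by
    have := integral_eq_sub_of_hasDerivWithinAt_Icc (f := fun x => x * f x ^ 2)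
      (f' := fun x => f x ^ 2 + x * (2 * f x * f' x)) zero_le_one
      (fun x hx => by
        refine ((hasDerivWithinAt_id x _).fun_mul ((hf x hx).fun_pow 2)).congr_deriv ?_
        simp only [id, Nat.cast_ofNat]
        ring)
      (by fun_prop)
    simpa using this
  have hf2 : IntervalIntegrable (fun x => f x ^ 2) volume 0 1 :=
    (hfc.pow 2).intervalIntegrable_of_Icc zero_le_one
  have hf'2 : IntervalIntegrable (fun x => f' x ^ 2) volume 0 1 :=
    (hf'.pow 2).intervalIntegrable_of_Icc zero_le_one
  calc f 1 ^ 2 = ∫ x in (0:ℝ)..1, (f x ^ 2 + x * (2 * f x * f' x)) := hftc.symm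
    _ ≤ ∫ x in (0:ℝ)..1, (2 * f x ^ 2 + f' x ^ 2) := by
        refine integral_mono_on zero_le_one
          (ContinuousOn.intervalIntegrable_of_Icc zero_le_one (by fun_prop))
          ((hf2.const_mul 2).add hf'2) fun x hx => ?_
        have hx2 : x ^ 2 ≤ 1 := by nlinarith [hx.1, hx.2]
        nlinarith [sq_nonneg (f x - x * f' x), mul_le_mul_of_nonneg_right hx2 (sq_nonneg (f' x))]
    _ = 2 * (∫ x in (0:ℝ)..1, f x ^ 2) + ∫ x in (0:ℝ)..1, f' x ^ 2 := by
        rw [integral_add (hf2.const_mul 2) hf'2, integral_const_mul]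

end UnitInterval

lemma boundary_flux_one_le {μ M₂ a₁ a₂ B₂ u v : ℝ} (ha₂ : a₂ ≠ 0) (hBC : a₁ * u + a₂ * v = 0)
    (hB₂ : -(a₁ / a₂) * μ + M₂ / 2 ≤ B₂) :
    2 * μ * u * v + M₂ * u ^ 2 ≤ 2 * B₂ * u ^ 2 := by
  have hv : v = -(a₁ / a₂) * u := by
    field_simp
    linarith
  rw [hv]
  nlinarith [mul_le_mul_of_nonneg_right hB₂ (sq_nonneg u)]

lemma boundary_flux_zero_le {μ M₂ b₁ b₂ B₁ σ u v d : ℝ} (hb₂ : b₂ ≠ 0) (hσ : 0 < σ)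
    (hBC : b₁ * u + b₂ * v = d) (hB₁ : b₁ / b₂ * μ - M₂ / 2 + σ ≤ -(2 * B₁)) :
    -(2 * μ * u * v + M₂ * u ^ 2) ≤ -(4 * B₁ * u ^ 2) + (2 * σ)⁻¹ * (μ / b₂) ^ 2 * d ^ 2 := by
  have hv : μ * v = μ / b₂ * d - b₁ / b₂ * μ * u := by
    field_simp
    linear_combination μ * hBC
  have hflux : -(2 * μ * u * v + M₂ * u ^ 2)
      = 2 * (-u) * (μ / b₂ * d) + 2 * (b₁ / b₂ * μ - M₂ / 2) * u ^ 2 := by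
    linear_combination (-2 * u) * hv
  have hyoung := two_mul_le_mul_sq_add_inv_mul_sq (mul_pos two_pos hσ) (-u) (μ / b₂ * d)
  nlinarith [mul_le_mul_of_nonneg_right hB₁ (sq_nonneg u)]

section Dissipation

variable {μ M₁ M₂ : ℝ} {U Ux Uxx Ut D : ℝ → ℝ}

lemma integral_two_mul_eq_of_heat_eq
    (hU : ∀ x ∈ Icc (0:ℝ) 1, HasDerivWithinAt U (Ux x) (Icc 0 1) x)
    (hUx : ∀ x ∈ Icc (0:ℝ) 1, HasDerivWithinAt Ux (Uxx x) (Icc 0 1) x)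
    (hUxx : ContinuousOn Uxx (Icc 0 1)) (hD : ContinuousOn D (Icc 0 1))
    (hPDE : ∀ x ∈ Ioo (0:ℝ) 1, Ut x = μ * Uxx x + D x + M₁ * U x + M₂ * Ux x) :
    ∫ x in (0:ℝ)..1, 2 * U x * Ut x =
      (2 * μ * U 1 * Ux 1 + M₂ * U 1 ^ 2) - (2 * μ * U 0 * Ux 0 + M₂ * U 0 ^ 2)
        - 2 * μ * (∫ x in (0:ℝ)..1, Ux x ^ 2) + 2 * M₁ * (∫ x in (0:ℝ)..1, U x ^ 2)
        + ∫ x in (0:ℝ)..1, 2 * U x * D x := by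
  have hUc : ContinuousOn U (Icc 0 1) := fun x hx => (hU x hx).continuousWithinAt
  have hUxc : ContinuousOn Ux (Icc 0 1) := fun x hx => (hUx x hx).continuousWithinAt
  have hint {φ : ℝ → ℝ} (hφ : ContinuousOn φ (Icc 0 1)) : IntervalIntegrable φ volume 0 1 :=
    hφ.intervalIntegrable_of_Icc zero_le_one
  have hflux : ∫ x in (0:ℝ)..1, (2 * μ * (Ux x * Ux x + U x * Uxx x) + M₂ * (2 * U x * Ux x))
      = (2 * μ * U 1 * Ux 1 + M₂ * U 1 ^ 2) - (2 * μ * U 0 * Ux 0 + M₂ * U 0 ^ 2) :=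
    integral_eq_sub_of_hasDerivWithinAt_Icc (f := fun x => 2 * μ * U x * Ux x + M₂ * U x ^ 2)
      zero_le_one (fun x hx => ((((hU x hx).const_mul (2 * μ)).fun_mul (hUx x hx)).add
        (((hU x hx).fun_pow 2).const_mul M₂)).congr_deriv (by simp only [Nat.cast_ofNat]; ring))
      (by fun_prop)
  calc ∫ x in (0:ℝ)..1, 2 * U x * Ut x
      = ∫ x in (0:ℝ)..1, ((2 * μ * (Ux x * Ux x + U x * Uxx x) + M₂ * (2 * U x * Ux x))
          + (-(2 * μ)) * Ux x ^ 2 + (2 * M₁) * U x ^ 2 + 2 * U x * D x) :=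
        integral_congr_Ioo_of_le zero_le_one fun x hx => by simp only [hPDE x hx]; ring
    _ = _ := by
        rw [integral_add (hint (by fun_prop)) (hint (by fun_prop)),
          integral_add (hint (by fun_prop)) (hint (by fun_prop)),
          integral_add (hint (by fun_prop)) (hint (by fun_prop)), hflux,
          integral_const_mul, integral_const_mul]
        ring

lemma integral_two_mul_le_of_abs_le {θ δ : ℝ} (hθ : 0 < θ) (hU : ContinuousOn U (Icc 0 1))
    (hD : ContinuousOn D (Icc 0 1)) (hDδ : ∀ x ∈ Ioo (0:ℝ) 1, |D x| ≤ |δ|) :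
    ∫ x in (0:ℝ)..1, 2 * U x * D x ≤ θ * (∫ x in (0:ℝ)..1, U x ^ 2) + θ⁻¹ * δ ^ 2 := by
  have hU2 : IntervalIntegrable (fun x => U x ^ 2) volume 0 1 :=
    (hU.pow 2).intervalIntegrable_of_Icc zero_le_one
  calc ∫ x in (0:ℝ)..1, 2 * U x * D x
      ≤ ∫ x in (0:ℝ)..1, (θ * U x ^ 2 + θ⁻¹ * δ ^ 2) :=
        integral_mono_on_of_le_Ioo zero_le_one
          (ContinuousOn.intervalIntegrable_of_Icc zero_le_one (by fun_prop))
          ((hU2.const_mul θ).add intervalIntegrable_const) fun x hx =>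
            (two_mul_le_mul_sq_add_inv_mul_sq hθ _ _).trans
              (add_le_add_right (mul_le_mul_of_nonneg_left (sq_le_sq.2 (hDδ x hx))
                (inv_nonneg.2 hθ.le)) _)
    _ = θ * (∫ x in (0:ℝ)..1, U x ^ 2) + θ⁻¹ * δ ^ 2 := by
        rw [integral_add (hU2.const_mul θ) intervalIntegrable_const, integral_const_mul]
        simp

lemma integral_two_mul_le_of_heat_eq {a₁ a₂ b₁ b₂ B₁ B₂ σ θ d δ : ℝ}
    (hU : ∀ x ∈ Icc (0:ℝ) 1, HasDerivWithinAt U (Ux x) (Icc 0 1) x)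
    (hUx : ∀ x ∈ Icc (0:ℝ) 1, HasDerivWithinAt Ux (Uxx x) (Icc 0 1) x)
    (hUxx : ContinuousOn Uxx (Icc 0 1)) (hD : ContinuousOn D (Icc 0 1))
    (hDδ : ∀ x ∈ Ioo (0:ℝ) 1, |D x| ≤ |δ|)
    (hPDE : ∀ x ∈ Ioo (0:ℝ) 1, Ut x = μ * Uxx x + D x + M₁ * U x + M₂ * Ux x)
    (hBC₁ : a₁ * U 1 + a₂ * Ux 1 = 0) (hBC₀ : b₁ * U 0 + b₂ * Ux 0 = d)
    (ha₂ : a₂ ≠ 0) (hb₂ : b₂ ≠ 0) (hB₁ : 0 ≤ B₁) (hB₂ : 0 ≤ B₂) (hB : B₁ + B₂ = μ)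
    (ha : -(a₁ / a₂) * μ + M₂ / 2 ≤ B₂) (hσ : 0 < σ) (hb : b₁ / b₂ * μ - M₂ / 2 + σ ≤ -(2 * B₁))
    (hθ : 0 < θ) (hM : M₁ + θ ≤ B₁ - 2 * B₂) :
    ∫ x in (0:ℝ)..1, 2 * U x * Ut x ≤
      -θ * (∫ x in (0:ℝ)..1, U x ^ 2) + (2 * σ)⁻¹ * (μ / b₂) ^ 2 * d ^ 2 + θ⁻¹ * δ ^ 2 := by
  have hUc : ContinuousOn U (Icc 0 1) := fun x hx => (hU x hx).continuousWithinAt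
  have hUxc : ContinuousOn Ux (Icc 0 1) := fun x hx => (hUx x hx).continuousWithinAt
  have hE : 0 ≤ ∫ x in (0:ℝ)..1, U x ^ 2 := integral_nonneg zero_le_one fun _ _ => sq_nonneg _
  have h₁ := boundary_flux_one_le ha₂ hBC₁ ha
  have h₀ := boundary_flux_zero_le hb₂ hσ hBC₀ hb
  have hsrc := integral_two_mul_le_of_abs_le hθ hUc hD hDδ
  have hpoinc := integral_sq_le_of_hasDerivWithinAt hU hUxc
  have htrace := sq_one_le_of_hasDerivWithinAt hU hUxc
  have hsplit : 2 * μ * (∫ x in (0:ℝ)..1, Ux x ^ 2)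
      = 2 * B₁ * (∫ x in (0:ℝ)..1, Ux x ^ 2) + 2 * B₂ * (∫ x in (0:ℝ)..1, Ux x ^ 2) := by
    rw [← hB]; ring
  rw [integral_two_mul_eq_of_heat_eq hU hUx hUxx hD hPDE]
  nlinarith [mul_le_mul_of_nonneg_left hpoinc hB₁, mul_le_mul_of_nonneg_left htrace hB₂,
    mul_le_mul_of_nonneg_right hM hE]

end Dissipation

lemma le_exp_mul_add_integral_of_hasDerivAt_le {E E' g : ℝ → ℝ} {θ a b : ℝ} (hab : a ≤ b)
    (hE : ContinuousOn E (Icc a b)) (hE' : ∀ s ∈ Ioo a b, HasDerivAt E (E' s) s)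
    (hg : ContinuousOn g (Icc a b)) (hle : ∀ s ∈ Ioo a b, E' s ≤ -θ * E s + g s) :
    E b ≤ E a * exp (-θ * (b - a)) + ∫ s in a..b, exp (-θ * (b - s)) * g s := by
  have hgrowth : exp (θ * b) * E b - exp (θ * a) * E a ≤ ∫ s in a..b, exp (θ * s) * g s := by
    refine sub_le_integral_of_hasDeriv_right_of_le hab (by fun_prop)
      (fun s hs => (((hasDerivAt_id s).const_mul θ).exp.mul (hE' s hs)).hasDerivWithinAt)
      (ContinuousOn.integrableOn_Icc (by fun_prop)) fun s hs => ?_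
    have := mul_le_mul_of_nonneg_left (hle s hs) (exp_pos (θ * s)).le
    simp only [id, mul_one]
    linarith
  have hconv : ∫ s in a..b, exp (-θ * (b - s)) * g s
      = exp (-θ * b) * ∫ s in a..b, exp (θ * s) * g s := by
    rw [← integral_const_mul]
    refine integral_congr fun s _ => ?_
    rw [← mul_assoc, ← exp_add]
    ring_nf
  have hexp (x : ℝ) : exp (-θ * b) * (exp (θ * x) * E x) = E x * exp (-θ * (b - x)) := by
    rw [← mul_assoc, ← exp_add]
    ring_nf
  calc E b = exp (-θ * b) * (exp (θ * b) * E b) := by simpa using (hexp b).symm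
    _ ≤ exp (-θ * b) * (exp (θ * a) * E a + ∫ s in a..b, exp (θ * s) * g s) := by
        gcongr
        linarith
    _ = E a * exp (-θ * (b - a)) + ∫ s in a..b, exp (-θ * (b - s)) * g s := by
        rw [mul_add, hexp, hconv]

lemma integral_exp_mul_le_integral {g : ℝ → ℝ} {θ a b : ℝ} (hθ : 0 ≤ θ) (hab : a ≤ b)
    (hg : ContinuousOn g (Icc a b)) (hg₀ : ∀ s ∈ Icc a b, 0 ≤ g s) :
    ∫ s in a..b, exp (-θ * (b - s)) * g s ≤ ∫ s in a..b, g s :=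
  integral_mono_on hab (ContinuousOn.intervalIntegrable_of_Icc hab (by fun_prop))
    (hg.intervalIntegrable_of_Icc hab) fun s hs =>
      mul_le_of_le_one_left (hg₀ s hs) (exp_le_one_iff.2 (by nlinarith [hs.2]))

lemma integral_exp_mul_le_of_le {g : ℝ → ℝ} {θ a b S : ℝ} (hθ : 0 < θ) (hab : a ≤ b)
    (hg : ContinuousOn g (Icc a b)) (hgS : ∀ s ∈ Icc a b, g s ≤ S) :
    ∫ s in a..b, exp (-θ * (b - s)) * g s ≤ (1 - exp (-θ * (b - a))) / θ * S := by
  have hkernel : ∫ s in a..b, exp (-θ * (b - s)) = (1 - exp (-θ * (b - a))) / θ := by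
    rw [integral_eq_sub_of_hasDerivAt (f := fun s => exp (-θ * (b - s)) / θ)
      (fun s _ => ?_) (Continuous.intervalIntegrable (by fun_prop) _ _)]
    · simp [sub_div]
    · refine ((((hasDerivAt_id s).const_sub b).const_mul (-θ)).exp.div_const θ).congr_deriv ?_
      field_simp
      simp
  calc ∫ s in a..b, exp (-θ * (b - s)) * g s
      ≤ ∫ s in a..b, exp (-θ * (b - s)) * S :=
        integral_mono_on hab (ContinuousOn.intervalIntegrable_of_Icc hab (by fun_prop))
          (Continuous.intervalIntegrable (by fun_prop) _ _) fun s hs =>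
            mul_le_mul_of_nonneg_left (hgS s hs) (exp_pos _).le
    _ = (1 - exp (-θ * (b - a))) / θ * S := by rw [integral_mul_const, hkernel]

lemma energy_bounds {E E' d₁ d₂ : ℝ → ℝ} {θ K L t : ℝ} (hθ : 0 < θ) (hK : 0 ≤ K) (hL : 0 ≤ L)
    (hE : ContinuousOn E (Ici 0)) (hE' : ∀ s > 0, HasDerivAt E (E' s) s)
    (hd₁ : ContinuousOn d₁ (Ici 0)) (hd₂ : ContinuousOn d₂ (Ici 0))
    (hle : ∀ s > 0, E' s ≤ -θ * E s + K * d₁ s ^ 2 + L * d₂ s ^ 2) (ht : 0 ≤ t) :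
    E t ≤ E 0 * exp (-θ * t) + K * (∫ s in (0:ℝ)..t, d₁ s ^ 2)
        + L * (∫ s in (0:ℝ)..t, d₂ s ^ 2) ∧
      E t ≤ E 0 * exp (-θ * t) + (1 - exp (-θ * t)) *
        (K / θ * sSup ((fun s => d₁ s ^ 2) '' Icc 0 t)
          + L / θ * sSup ((fun s => d₂ s ^ 2) '' Icc 0 t)) := by
  have hIcc : Icc 0 t ⊆ Ici (0:ℝ) := Icc_subset_Ici_self
  have hd₁' := hd₁.mono hIcc
  have hd₂' := hd₂.mono hIcc
  have hg : ContinuousOn (fun s => K * d₁ s ^ 2 + L * d₂ s ^ 2) (Icc 0 t) := by fun_prop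
  have hduhamel := le_exp_mul_add_integral_of_hasDerivAt_le ht (hE.mono hIcc)
    (fun s hs => hE' s hs.1) hg fun s hs => by simpa only [add_assoc] using hle s hs.1
  rw [sub_zero] at hduhamel
  constructor
  · have hint {d : ℝ → ℝ} (hd : ContinuousOn d (Icc 0 t)) :
        IntervalIntegrable (fun s => d s ^ 2) volume 0 t :=
      (hd.pow 2).intervalIntegrable_of_Icc ht
    calc E t ≤ _ := hduhamel
      _ ≤ E 0 * exp (-θ * t) + ∫ s in (0:ℝ)..t, (K * d₁ s ^ 2 + L * d₂ s ^ 2) := by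
          gcongr
          exact integral_exp_mul_le_integral hθ.le ht hg fun s _ => by positivity
      _ = _ := by
          rw [integral_add ((hint hd₁').const_mul K) ((hint hd₂').const_mul L),
            integral_const_mul, integral_const_mul, add_assoc]
  · have hsSup {d : ℝ → ℝ} (hd : ContinuousOn d (Icc 0 t)) (s : ℝ) (hs : s ∈ Icc 0 t) :
        d s ^ 2 ≤ sSup ((fun s => d s ^ 2) '' Icc 0 t) :=
      le_csSup (isCompact_Icc.image_of_continuousOn (hd.pow 2)).bddAbove (mem_image_of_mem _ hs)
    calc E t ≤ _ := hduhamel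
      _ ≤ E 0 * exp (-θ * t) + (1 - exp (-θ * t)) / θ *
            (K * sSup ((fun s => d₁ s ^ 2) '' Icc 0 t)
              + L * sSup ((fun s => d₂ s ^ 2) '' Icc 0 t)) := by
          gcongr
          simpa only [sub_zero] using integral_exp_mul_le_of_le hθ ht hg fun s hs =>
            add_le_add (mul_le_mul_of_nonneg_left (hsSup hd₁' s hs) hK)
              (mul_le_mul_of_nonneg_left (hsSup hd₂' s hs) hL)
      _ = _ := by ring

theorem stmt_15
    (μ a₁ a₂ b₁ b₂ M₁ M₂ : ℝ) (d : ℝ → ℝ → ℝ) (d₁ d₂ : ℝ → ℝ)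
    (hμ : 0 < μ) (hb₂ : b₂ ≠ 0)
    (hd₁ : ContDiffOn ℝ 2 d₁ (Ici 0)) (hd₂ : ContinuousOn d₂ (Ici 0))
    (hdcont : ContinuousOn (fun p : ℝ × ℝ => d p.1 p.2) (Ici 0 ×ˢ Icc 0 1))
    (hd : ∀ t ≥ (0:ℝ), ∀ x ∈ Ioo (0:ℝ) 1, |d t x| ≤ |d₂ t|)
    -- Assumption A3b
    (ha₂ : a₂ ≠ 0)
    (hB' : ∃ B₁' B₂' : ℝ, 0 ≤ B₁' ∧ 0 ≤ B₂' ∧ B₁' + B₂' = μ ∧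
      -(a₁ / a₂) * μ + M₂ / 2 ≤ B₂' ∧ b₁ / b₂ * μ - M₂ / 2 < -(2 * B₁') ∧
      M₁ < B₁' - 2 * B₂') :
    ∃ C₃ > (0:ℝ), ∃ C₄ > (0:ℝ), ∃ C₅ > (0:ℝ),
      ∀ u ux uxx ut : ℝ → ℝ → ℝ,
        (∀ t ≥ (0:ℝ), ∀ x ∈ Icc (0:ℝ) 1, HasDerivWithinAt (u t) (ux t x) (Icc 0 1) x) →
        (∀ t ≥ (0:ℝ), ∀ x ∈ Icc (0:ℝ) 1, HasDerivWithinAt (ux t) (uxx t x) (Icc 0 1) x) →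
        (∀ t ≥ (0:ℝ), ContinuousOn (uxx t) (Icc (0:ℝ) 1)) →
        (∀ t > (0:ℝ), ∀ x ∈ Icc (0:ℝ) 1, HasDerivAt (fun s => u s x) (ut t x) t) →
        (∀ t > (0:ℝ), ∀ x ∈ Ioo (0:ℝ) 1,
          ut t x = μ * uxx t x + d t x + M₁ * u t x + M₂ * ux t x) →
        (∀ t ≥ (0:ℝ), a₁ * u t 1 + a₂ * ux t 1 = 0) →
        (∀ t ≥ (0:ℝ), b₁ * u t 0 + b₂ * ux t 0 = d₁ t) →
        ContinuousOn (fun t => ∫ x in (0:ℝ)..1, (u t x) ^ 2) (Ici 0) →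
        (∀ t > (0:ℝ), HasDerivAt (fun s => ∫ x in (0:ℝ)..1, (u s x) ^ 2)
          (∫ x in (0:ℝ)..1, 2 * u t x * ut t x) t) →
        ∀ t ≥ (0:ℝ),
          ((∫ x in (0:ℝ)..1, (u t x) ^ 2) ≤
            (∫ x in (0:ℝ)..1, (u 0 x) ^ 2) * Real.exp (-C₃ * t)
              + C₄ * (∫ s in (0:ℝ)..t, (d₁ s) ^ 2)
              + C₅ * (∫ s in (0:ℝ)..t, (d₂ s) ^ 2)) ∧
          ((∫ x in (0:ℝ)..1, (u t x) ^ 2) ≤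
            (∫ x in (0:ℝ)..1, (u 0 x) ^ 2) * Real.exp (-C₃ * t)
              + (1 - Real.exp (-C₃ * t)) *
                (C₄ * sSup ((fun s => (d₁ s) ^ 2) '' Icc 0 t)
                  + C₅ * sSup ((fun s => (d₂ s) ^ 2) '' Icc 0 t))) := by
  obtain ⟨B₁, B₂, hB₁, hB₂, hB, ha, hb, hM⟩ := hB'
  set σ := -(2 * B₁) - (b₁ / b₂ * μ - M₂ / 2) with hσ_def
  set θ := B₁ - 2 * B₂ - M₁ with hθ_def
  set K := (2 * σ)⁻¹ * (μ / b₂) ^ 2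
  have hσ : 0 < σ := by linarith
  have hθ : 0 < θ := by linarith
  have hK : 0 < K := by positivity
  -- `K + K / θ` and `θ⁻¹ + θ⁻¹ / θ` dominate the coefficients of both bounds in `energy_bounds`
  refine ⟨θ, hθ, K + K / θ, by positivity, θ⁻¹ + θ⁻¹ / θ, by positivity, ?_⟩
  intro u ux uxx ut hu hux huxx _ hPDE hBC₁ hBC₀ hEc hE' t ht
  have hdiss (s : ℝ) (hs : s > 0) : ∫ x in (0:ℝ)..1, 2 * u s x * ut s x
      ≤ -θ * (∫ x in (0:ℝ)..1, u s x ^ 2) + K * d₁ s ^ 2 + θ⁻¹ * d₂ s ^ 2 :=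
    integral_two_mul_le_of_heat_eq (hu s hs.le) (hux s hs.le) (huxx s hs.le)
      (hdcont.comp (Continuous.continuousOn (Continuous.prodMk_right s))
        fun _ hx => mk_mem_prod (mem_Ici.2 hs.le) hx) (hd s hs.le) (hPDE s hs)
      (hBC₁ s hs.le) (hBC₀ s hs.le) ha₂ hb₂ hB₁ hB₂ hB ha hσ (by linarith) hθ (by linarith)
  obtain ⟨h₁, h₂⟩ := energy_bounds hθ hK.le (inv_nonneg.2 hθ.le) hEc hE' hd₁.continuousOn hd₂
    hdiss ht
  refine ⟨h₁.trans ?_, h₂.trans ?_⟩ <;> gcongr <;> first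
    | exact integral_nonneg ht fun _ _ => sq_nonneg _
    | exact Real.sSup_nonneg (by rintro _ ⟨_, -, rfl⟩; positivity)
    | exact sub_nonneg.2 (exp_le_one_iff.2 (by nlinarith))
    | exact le_add_of_nonneg_right (by positivity)
    | exact le_add_of_nonneg_left (by positivity)
end
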